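/- (Analytic gradient maps have analytic potentials.) Let X and Y be Banach spaces, let ι : Y → X* be a continuous linear embedding, let U ⊆ X be open, let E : U → ℝ be Fréchet differentiable, and let M : U → Y be a real analytic map such that E′(x)(v) = (ι(M(x)))(v) for all x ∈ U and v ∈ X (i.e., M is a gradient map for E). Then E is real analytic on U. -/

import Mathlib

/-!
Near a point `x₀` of `U`, expand the analytic derivative as `D (x₀ + y) = ∑ pₙ(y, …, y)`.
Along the segment from `x₀` to `x₀ + y`, the fundamental theorem of calculus gives
`E (x₀ + y) = E x₀ + ∫₀¹ D (x₀ + t • y) y dt`, and since `∫₀¹ tⁿ dt = 1 / (n + 1)` the integral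
can be taken term by term (dominated convergence). The result is a power series for `E`
whose radius is no smaller than that of `p`.
-/

open Set

namespace FormalMultilinearSeries

variable {X F : Type*} [NormedAddCommGroup X] [NormedSpace ℝ X] [NormedAddCommGroup F]
  [NormedSpace ℝ F]

noncomputable def primitive (p : FormalMultilinearSeries ℝ X (X →L[ℝ] F)) (c : F) :
    FormalMultilinearSeries ℝ X F
  | 0 => ContinuousMultilinearMap.constOfIsEmpty ℝ (fun _ => X) c
  | n + 1 => ((n : ℝ) + 1)⁻¹ • (p n).uncurryRight

variable (p : FormalMultilinearSeries ℝ X (X →L[ℝ] F)) (c : F)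

@[simp]
theorem primitive_zero_apply (v : Fin 0 → X) : p.primitive c 0 v = c := rfl

@[simp]
theorem primitive_succ_apply_const (n : ℕ) (y : X) :
    p.primitive c (n + 1) (fun _ => y) = ((n : ℝ) + 1)⁻¹ • p n (fun _ => y) y := rfl

theorem norm_primitive_succ_le (n : ℕ) : ‖p.primitive c (n + 1)‖ ≤ ‖p n‖ := by
  rw [primitive, norm_smul, ContinuousMultilinearMap.uncurryRight_norm]
  refine mul_le_of_le_one_left (by positivity) ?_
  rw [norm_inv, Real.norm_of_nonneg (by positivity)]
  exact inv_le_one_of_one_le₀ (by simp)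

theorem radius_le_radius_primitive : p.radius ≤ (p.primitive c).radius := by
  refine ENNReal.le_of_forall_nnreal_lt fun a ha => ?_
  refine (p.primitive c).le_radius_of_summable_norm ?_
  rw [← summable_nat_add_iff 1]
  refine .of_nonneg_of_le (fun n => by positivity) (fun n => ?_)
    ((p.summable_norm_mul_pow ha).mul_left (a : ℝ))
  calc ‖p.primitive c (n + 1)‖ * (a : ℝ) ^ (n + 1) ≤ ‖p n‖ * (a : ℝ) ^ (n + 1) := by
        gcongr; exact p.norm_primitive_succ_le c n
    _ = a * (‖p n‖ * (a : ℝ) ^ n) := by ring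

end FormalMultilinearSeries

open MeasureTheory in
theorem hasSum_inv_succ_smul_of_hasDerivAt {F : Type*} [NormedAddCommGroup F] [NormedSpace ℝ F]
    [CompleteSpace F] {f f' : ℝ → F} {c : ℕ → F} (hc : Summable (‖c ·‖))
    (hf : ∀ t ∈ Icc (0 : ℝ) 1, HasDerivAt f (f' t) t)
    (hf' : ∀ t ∈ Icc (0 : ℝ) 1, HasSum (fun n => t ^ n • c n) (f' t)) :
    HasSum (fun n : ℕ => ((n : ℝ) + 1)⁻¹ • c n) (f 1 - f 0) := by
  have hbound : ∀ n, ∀ t ∈ Icc (0 : ℝ) 1, ‖t ^ n • c n‖ ≤ ‖c n‖ := fun n t ht => by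
    rw [norm_smul, norm_pow, Real.norm_of_nonneg ht.1]
    exact mul_le_of_le_one_left (norm_nonneg _) (pow_le_one₀ ht.1 ht.2)
  have hcont : ContinuousOn f' (Icc 0 1) :=
    (continuousOn_tsum (fun n => by fun_prop) hc hbound).congr fun t ht => (hf' t ht).tsum_eq.symm
  have hFTC : ∫ t in (0 : ℝ)..1, f' t = f 1 - f 0 :=
    intervalIntegral.integral_eq_sub_of_hasDerivAt (by rwa [uIcc_of_le zero_le_one])
      (hcont.intervalIntegrable_of_Icc zero_le_one)
  have hterm : ∀ n : ℕ, ∫ t in (0 : ℝ)..1, t ^ n • c n = ((n : ℝ) + 1)⁻¹ • c n := fun n => by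
    simp [intervalIntegral.integral_smul_const, integral_pow]
  rw [← hFTC, ← funext hterm]
  refine intervalIntegral.hasSum_integral_of_dominated_convergence (fun n _ => ‖c n‖)
    (fun n => by fun_prop) (fun n => .of_forall fun t ht => hbound n t (Ioc_subset_Icc_self ?_))
    (.of_forall fun _ _ => hc) intervalIntegrable_const
    (.of_forall fun t ht => hf' t (Ioc_subset_Icc_self ?_))
  all_goals rwa [uIoc_of_le zero_le_one] at ht

section

variable {X F : Type*} [NormedAddCommGroup X] [NormedSpace ℝ X] [NormedAddCommGroup F]
  [NormedSpace ℝ F] [CompleteSpace F]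

theorem HasFPowerSeriesOnBall.hasFPowerSeriesOnBall_primitive {E : X → F} {D : X → X →L[ℝ] F}
    {p : FormalMultilinearSeries ℝ X (X →L[ℝ] F)} {x₀ : X} {r : ENNReal}
    (hD : HasFPowerSeriesOnBall D p x₀ r)
    (hE : ∀ x ∈ Metric.eball x₀ r, HasFDerivAt E (D x) x) :
    HasFPowerSeriesOnBall E (p.primitive (E x₀)) x₀ r where
  r_le := hD.r_le.trans (p.radius_le_radius_primitive _)
  r_pos := hD.r_pos
  hasSum {y} hy := by
    have hseg : ∀ t ∈ Icc (0 : ℝ) 1, t • y ∈ Metric.eball (0 : X) r := fun t ht =>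
      (convex_eball 0 r).smul_mem_of_zero_mem (Metric.mem_eball_self hD.r_pos) hy ht
    have hc : Summable fun n => ‖p n (fun _ => y) y‖ :=
      .of_nonneg_of_le (fun n => norm_nonneg _) (fun n => (p n (fun _ => y)).le_opNorm y)
        ((p.summable_norm_apply (Metric.eball_subset_eball hD.r_le hy)).mul_right ‖y‖)
    have hray : ∀ t ∈ Icc (0 : ℝ) 1,
        HasSum (fun n => t ^ n • p n (fun _ => y) y) (D (x₀ + t • y) y) := fun t ht => by
      have h := (hD.hasSum (hseg t ht)).mapL (ContinuousLinearMap.apply ℝ F y)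
      simp only [ContinuousLinearMap.apply_apply] at h
      convert h using 2 with n
      simp [ContinuousMultilinearMap.map_smul_univ (p n) (fun _ => t) (fun _ => y)]
    have hderiv : ∀ t ∈ Icc (0 : ℝ) 1,
        HasDerivAt (fun s : ℝ => E (x₀ + s • y)) (D (x₀ + t • y) y) t := fun t ht => by
      have hx : x₀ + t • y ∈ Metric.eball x₀ r := by
        simpa [Metric.mem_eball, edist_eq_enorm_sub] using hseg t ht
      have hline : HasDerivAt (fun s : ℝ => x₀ + s • y) y t := by
        simpa using ((hasDerivAt_id t).smul_const y).const_add x₀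
      exact (hE _ hx).comp_hasDerivAt t hline
    rw [← hasSum_nat_add_iff' 1]
    simpa using hasSum_inv_succ_smul_of_hasDerivAt hc hderiv hray

theorem AnalyticOnNhd.of_hasFDerivAt {E : X → F} {D : X → X →L[ℝ] F} {U : Set X} (hU : IsOpen U)
    (hD : AnalyticOnNhd ℝ D U) (hE : ∀ x ∈ U, HasFDerivAt E (D x) x) :
    AnalyticOnNhd ℝ E U := by
  intro x₀ hx₀
  obtain ⟨p, r, hp⟩ := hD x₀ hx₀
  obtain ⟨ε, hε, hball⟩ := EMetric.isOpen_iff.1 hU x₀ hx₀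
  have hp' := hp.mono (lt_min hp.r_pos hε) (min_le_left r ε)
  exact ⟨_, _, hp'.hasFPowerSeriesOnBall_primitive fun x hx =>
    hE x (hball (Metric.eball_subset_eball (min_le_right r ε) hx))⟩

end

theorem analytic_gradient_map_has_analytic_potential_general
    {X Y : Type*} [NormedAddCommGroup X] [NormedSpace ℝ X]
    [NormedAddCommGroup Y] [NormedSpace ℝ Y]
    (ι : Y →L[ℝ] StrongDual ℝ X)
    (U : Set X) (hU : IsOpen U)
    (E : X → ℝ) (hEdiff : ∀ x ∈ U, DifferentiableAt ℝ E x)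
    (M : X → Y) (hMan : AnalyticOnNhd ℝ M U)
    (hgrad : ∀ x ∈ U, ∀ v : X, fderiv ℝ E x v = ι (M x) v) :
    AnalyticOnNhd ℝ E U := by
  have hD : AnalyticOnNhd ℝ (fun x => ι (M x)) U := fun x hx =>
    (ι.analyticAt (M x)).comp (hMan x hx)
  refine hD.of_hasFDerivAt hU fun x hx => ?_
  rw [← ContinuousLinearMap.ext (hgrad x hx)]
  exact (hEdiff x hx).hasFDerivAt

/-- Analytic gradient maps have analytic potentials: if `M : U → Y` is a real analytic
gradient map for a Fréchet-differentiable function `E : U → ℝ` via a continuous linear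
embedding `ι : Y → X*`, then `E` is real analytic on `U`. -/
theorem analytic_gradient_map_has_analytic_potential
    {X Y : Type*} [NormedAddCommGroup X] [NormedSpace ℝ X] [CompleteSpace X]
    [NormedAddCommGroup Y] [NormedSpace ℝ Y] [CompleteSpace Y]
    (ι : Y →L[ℝ] StrongDual ℝ X) (hι : Function.Injective ι)
    (U : Set X) (hU : IsOpen U)
    (E : X → ℝ) (hEdiff : ∀ x ∈ U, DifferentiableAt ℝ E x)
    (M : X → Y) (hMan : AnalyticOnNhd ℝ M U)
    (hgrad : ∀ x ∈ U, ∀ v : X, fderiv ℝ E x v = ι (M x) v) :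
    AnalyticOnNhd ℝ E U :=
  analytic_gradient_map_has_analytic_potential_general ι U hU E hEdiff M hMan hgrad
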